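/- arXiv:1606.00770 — 3 statements merged into one kernel-verified Lean document; each statement's English description precedes it below -/
import Mathlib

section
/- (Sobol' formula) For a square-integrable f on [0,1]^d with x = (y,z) a partition of the variables and z' an independent copy of z, the variance D_y corresponding to the subset y satisfies D_y = ∫ f(y,z) f(y,z') dy dz dz' − f_0^2. -/
/-!
The ANOVA terms are orthogonal: if `i ∈ u \ v`, integrating `F u * F v` first in `x i` kills it,
because `F v` does not depend on `x i` and `F u` has zero mean in that variable. Gluing `x` on `K`
with an independent `x'` off `K` preserves the product measure, so `∫∫ f x f (glue x x')` expands
into a double sum over pairs `(u, v)`. A term with `v ⊆ K` is `⟨F u, F v⟩`, one with `v ⊄ K`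
vanishes after integrating `x'` in a coordinate of `v \ K`; what remains is `∑_{u ⊆ K} ‖F u‖²`,
whose `u = ∅` term is `f₀²`.
-/

open MeasureTheory Function

instance isProbabilityMeasure_volume_restrict_Icc_zero_one :
    IsProbabilityMeasure ((volume : Measure ℝ).restrict (Set.Icc 0 1)) :=
  ⟨by simp⟩

theorem integral_integral_finsetSum {β γ κ E : Type*} [MeasurableSpace β] [MeasurableSpace γ]
    [NormedAddCommGroup E] [NormedSpace ℝ E] {μ : Measure β} {ν : Measure γ} [SFinite μ]
    [SFinite ν] (s : Finset κ) {g : κ → β → γ → E}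
    (hg : ∀ k ∈ s, Integrable (uncurry (g k)) (μ.prod ν)) :
    ∫ x, ∫ y, ∑ k ∈ s, g k x y ∂ν ∂μ = ∑ k ∈ s, ∫ x, ∫ y, g k x y ∂ν ∂μ := by
  calc ∫ x, ∫ y, ∑ k ∈ s, g k x y ∂ν ∂μ = ∫ z, ∑ k ∈ s, uncurry (g k) z ∂μ.prod ν :=
        integral_integral (integrable_finsetSum s hg)
    _ = ∑ k ∈ s, ∫ z, uncurry (g k) z ∂μ.prod ν := integral_finsetSum s hg
    _ = ∑ k ∈ s, ∫ x, ∫ y, g k x y ∂ν ∂μ :=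
        Finset.sum_congr rfl fun k hk => (integral_integral (hg k hk)).symm

section ProductMeasure

variable {ι : Type*} [Fintype ι] [DecidableEq ι] {α : ι → Type*} [∀ i, MeasurableSpace (α i)]
  (μ : ∀ i, Measure (α i)) [∀ i, IsProbabilityMeasure (μ i)]

theorem measurePreserving_piecewise (s : Finset ι) :
    MeasurePreserving (fun p : (∀ i, α i) × (∀ i, α i) => s.piecewise p.1 p.2)
      ((Measure.pi μ).prod (Measure.pi μ)) (Measure.pi μ) := by
  have e := measurePreserving_piEquivPiSubtypeProd μ (· ∈ s)
  convert e.symm.comp ((measurePreserving_fst.comp e).prod (measurePreserving_snd.comp e))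
    using 1
  ext p i
  by_cases hi : i ∈ s <;>
    simp [hi, MeasurableEquiv.piEquivPiSubtypeProd, Equiv.piEquivPiSubtypeProd]

theorem measurePreserving_update (i : ι) :
    MeasurePreserving (fun p : (∀ j, α j) × α i => update p.1 i p.2)
      ((Measure.pi μ).prod (μ i)) (Measure.pi μ) := by
  have hglue := measurePreserving_piecewise μ (Finset.univ.erase i)
  have hproj := (MeasurePreserving.id (Measure.pi μ)).prod (measurePreserving_eval μ i)
  -- `update x i (x' i)` is `x` glued off `{i}` with `x'`
  refine ⟨measurable_update', ?_⟩
  rw [← hproj.map_eq, Measure.map_map measurable_update' hproj.measurable]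
  convert hglue.map_eq using 2
  ext p j
  by_cases hj : j = i
  · subst hj; simp
  · simp [hj]

theorem integral_eq_integral_integral_update {E : Type*} [NormedAddCommGroup E]
    [NormedSpace ℝ E] (i : ι) {h : (∀ j, α j) → E} (hh : Integrable h (Measure.pi μ)) :
    ∫ x, h x ∂Measure.pi μ = ∫ x, ∫ t, h (update x i t) ∂μ i ∂Measure.pi μ := by
  have hu := measurePreserving_update μ i
  conv_lhs => rw [← hu.map_eq]
  rw [integral_map hu.measurable.aemeasurable (by rw [hu.map_eq]; exact hh.1)]
  exact integral_prod _ ((hu.integrable_comp hh.1).mpr hh)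

theorem integral_eq_zero_of_integral_update_eq_zero {E : Type*} [NormedAddCommGroup E]
    [NormedSpace ℝ E] (i : ι) {h : (∀ j, α j) → E}
    (hh : ∀ x, ∫ t, h (update x i t) ∂μ i = 0) : ∫ x, h x ∂Measure.pi μ = 0 := by
  by_cases hint : Integrable h (Measure.pi μ)
  · simp [integral_eq_integral_integral_update μ i hint, hh]
  · exact integral_undef hint

theorem integral_mul_eq_zero_of_dependsOn (i : ι) {g h : (∀ j, α j) → ℝ}
    (hg : ∀ x, ∫ t, g (update x i t) ∂μ i = 0) {s : Set ι} (hh : DependsOn h s) (hi : i ∉ s) :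
    ∫ x, g x * h x ∂Measure.pi μ = 0 := by
  refine integral_eq_zero_of_integral_update_eq_zero μ i fun x => ?_
  have hupdate : ∀ t, h (update x i t) = h x :=
    fun t => hh fun j hj => update_of_ne (ne_of_mem_of_not_mem hj hi) ..
  simp [hupdate, integral_mul_const, hg]

theorem integral_comp_piecewise_eq_zero {s : Finset ι} {i : ι} (hi : i ∉ s)
    {g : (∀ j, α j) → ℝ} (hg : ∀ x, ∫ t, g (update x i t) ∂μ i = 0) (x : ∀ j, α j) :
    ∫ x', g (s.piecewise x x') ∂Measure.pi μ = 0 :=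
  integral_eq_zero_of_integral_update_eq_zero μ i fun x' => by
    simpa [s.update_piecewise_of_notMem x x' hi] using hg (s.piecewise x x')

theorem integrable_mul_comp_piecewise (s : Finset ι) {g h : (∀ j, α j) → ℝ}
    (hg : MemLp g 2 (Measure.pi μ)) (hh : MemLp h 2 (Measure.pi μ)) :
    Integrable (fun p : (∀ j, α j) × (∀ j, α j) => g p.1 * h (s.piecewise p.1 p.2))
      ((Measure.pi μ).prod (Measure.pi μ)) :=
  (hg.comp_measurePreserving measurePreserving_fst).integrable_mul
    (hh.comp_measurePreserving (measurePreserving_piecewise μ s))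

theorem integral_integral_sum_mul_sum_comp_piecewise {κ : Type*} [Fintype κ] (s : Finset ι)
    {F : κ → (∀ j, α j) → ℝ} (hF : ∀ u, MemLp (F u) 2 (Measure.pi μ)) :
    ∫ x, ∫ x', (∑ u, F u x) * ∑ v, F v (s.piecewise x x') ∂Measure.pi μ ∂Measure.pi μ
      = ∑ u, ∑ v, ∫ x, ∫ x', F u x * F v (s.piecewise x x') ∂Measure.pi μ ∂Measure.pi μ := by
  have hint := fun u v => integrable_mul_comp_piecewise μ s (hF u) (hF v)
  simp_rw [Finset.sum_mul_sum]
  rw [integral_integral_finsetSum _ fun u _ => integrable_finsetSum _ fun v _ => hint u v]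
  exact Finset.sum_congr rfl fun u _ => integral_integral_finsetSum _ fun v _ => hint u v

theorem integral_mul_eq_zero_of_ne {F : Finset ι → (∀ j, α j) → ℝ}
    (hdep : ∀ u, DependsOn (F u) u)
    (hzero : ∀ u, ∀ i ∈ u, ∀ x, ∫ t, F u (update x i t) ∂μ i = 0) {u v : Finset ι}
    (huv : u ≠ v) : ∫ x, F u x * F v x ∂Measure.pi μ = 0 := by
  by_cases huv' : u ⊆ v
  · obtain ⟨i, hiv, hiu⟩ := Finset.not_subset.mp fun hvu => huv (huv'.antisymm hvu)
    simp_rw [mul_comm (F u _)]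
    exact integral_mul_eq_zero_of_dependsOn μ i (hzero v i hiv) (hdep u) hiu
  · obtain ⟨i, hiu, hiv⟩ := Finset.not_subset.mp huv'
    exact integral_mul_eq_zero_of_dependsOn μ i (hzero u i hiu) (hdep v) hiv

theorem integral_integral_mul_comp_piecewise {F : Finset ι → (∀ j, α j) → ℝ}
    (hdep : ∀ u, DependsOn (F u) u)
    (hzero : ∀ u, ∀ i ∈ u, ∀ x, ∫ t, F u (update x i t) ∂μ i = 0) (s u v : Finset ι) :
    ∫ x, ∫ x', F u x * F v (s.piecewise x x') ∂Measure.pi μ ∂Measure.pi μ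
      = if u = v ∧ u ⊆ s then ∫ x, F u x ^ 2 ∂Measure.pi μ else 0 := by
  by_cases hvs : v ⊆ s
  · have hpiecewise : ∀ x x', F v (s.piecewise x x') = F v x :=
      fun x x' => hdep v fun i hi => s.piecewise_eq_of_mem _ _ (hvs hi)
    simp only [hpiecewise, integral_const, probReal_univ, one_smul]
    split_ifs with h
    · simp [h.1, sq]
    · exact integral_mul_eq_zero_of_ne μ hdep hzero fun huv => h ⟨huv, huv ▸ hvs⟩
  · obtain ⟨i, hiv, his⟩ := Finset.not_subset.mp hvs
    rw [if_neg fun h : u = v ∧ u ⊆ s => hvs (h.1 ▸ h.2)]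
    simp [integral_const_mul, integral_comp_piecewise_eq_zero μ his (hzero v i hiv)]

end ProductMeasure

theorem Finset.sum_filter_subset_eq_add {ι M : Type*} [Fintype ι] [DecidableEq ι]
    [AddCommMonoid M] (K : Finset ι) (c : Finset ι → M) :
    ∑ u ∈ univ.filter (· ⊆ K), c u = c ∅ + ∑ u ∈ univ.filter (fun u => u ≠ ∅ ∧ u ⊆ K), c u := by
  rw [← sum_filter_add_sum_filter_not _ (· = ∅), filter_filter, filter_filter]
  congr 1
  · rw [show univ.filter (fun u : Finset ι => u ⊆ K ∧ u = ∅) = {∅} by ext; aesop, sum_singleton]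
  · simp_rw [and_comm]

theorem sobol_formula_general (d : ℕ) (f : (Fin d → ℝ) → ℝ)
    (μ : Measure (Fin d → ℝ))
    (hμ : μ = Measure.pi fun _ => (volume : Measure ℝ).restrict (Set.Icc 0 1))
    (F : Finset (Fin d) → (Fin d → ℝ) → ℝ)
    (hF : ∀ u, MemLp (F u) 2 μ)
    (hf0 : ∀ x, F ∅ x = ∫ y, f y ∂μ)
    (hdec : ∀ x, f x = ∑ u : Finset (Fin d), F u x)
    (hdep : ∀ u, ∀ x y : Fin d → ℝ, (∀ i ∈ u, x i = y i) → F u x = F u y)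
    (hzero : ∀ u, u ≠ ∅ → ∀ i ∈ u, ∀ x : Fin d → ℝ,
      ∫ t in Set.Icc (0 : ℝ) 1, F u (Function.update x i t) = 0)
    (K : Finset (Fin d)) :
    ∑ u ∈ Finset.univ.filter (fun u : Finset (Fin d) => u ≠ ∅ ∧ u ⊆ K),
        ∫ x, (F u x) ^ 2 ∂μ
      = (∫ x, ∫ x', f x * f (fun j => if j ∈ K then x j else x' j) ∂μ ∂μ)
          - (∫ x, f x ∂μ) ^ 2 := by
  have hmean : ∫ x, F ∅ x ^ 2 ∂μ = (∫ x, f x ∂μ) ^ 2 := by subst hμ; simp [hf0]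
  have hglue : ∫ x, ∫ x', f x * f (fun j => if j ∈ K then x j else x' j) ∂μ ∂μ
      = ∑ u ∈ Finset.univ.filter (· ⊆ K), ∫ x, F u x ^ 2 ∂μ := by
    subst hμ
    simp_rw [hdec]
    -- the glued point `fun j => if j ∈ K then x j else x' j` is `K.piecewise x x'` unfolded
    refine (integral_integral_sum_mul_sum_comp_piecewise _ K hF).trans ?_
    simp_rw [integral_integral_mul_comp_piecewise _ (fun u x y => hdep u x y)
      (fun u i hi => hzero u (Finset.ne_empty_of_mem hi) i hi), ite_and, Finset.sum_ite_eq,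
      Finset.mem_univ, if_true, Finset.sum_filter]
  rw [hglue, Finset.sum_filter_subset_eq_add, hmean]
  ring

/-- Sobol' formula: for a square-integrable `f` on `[0,1]^d` with variable partition
`x = (y,z)` given by the index set `K`, the variance `D_y` (the sum of the partial
variances over nonempty subsets of `K`) satisfies
`D_y = ∫ f(y,z) f(y,z') dy dz dz' − f₀²`. -/
theorem sobol_formula (d : ℕ) (f : (Fin d → ℝ) → ℝ)
    (μ : Measure (Fin d → ℝ))
    (hμ : μ = Measure.pi fun _ => (volume : Measure ℝ).restrict (Set.Icc 0 1))
    (F : Finset (Fin d) → (Fin d → ℝ) → ℝ)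
    (hf : MemLp f 2 μ) (hF : ∀ u, MemLp (F u) 2 μ)
    (hf0 : ∀ x, F ∅ x = ∫ y, f y ∂μ)
    (hdec : ∀ x, f x = ∑ u : Finset (Fin d), F u x)
    (hdep : ∀ u, ∀ x y : Fin d → ℝ, (∀ i ∈ u, x i = y i) → F u x = F u y)
    (hzero : ∀ u, u ≠ ∅ → ∀ i ∈ u, ∀ x : Fin d → ℝ,
      ∫ t in Set.Icc (0 : ℝ) 1, F u (Function.update x i t) = 0)
    (K : Finset (Fin d)) :
    ∑ u ∈ Finset.univ.filter (fun u : Finset (Fin d) => u ≠ ∅ ∧ u ⊆ K),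
        ∫ x, (F u x) ^ 2 ∂μ
      = (∫ x, ∫ x', f x * f (fun j => if j ∈ K then x j else x' j) ∂μ ∂μ)
          - (∫ x, f x ∂μ) ^ 2 :=
  sobol_formula_general d f μ hμ F hF hf0 hdec hdep hzero K
end

section
/- (Sobol'–Kucherenko formula) For f square-integrable on [0,1]^d with variable partition x = (y,z) and an independent copy x' = (y',z'), D_y = ∫ f(y,z) [f(y,z') − f(y',z')] dy dz dy' dz'. -/
/-!
Since `x` and `x'` are independent, `∫∫ f(x) f(x') = f₀²` by Fubini. The recombined point
`(y, z')` is again uniformly distributed on the cube, so `f(x) f(y, z')` and `f(x) f(x')` are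
products of square-integrable functions and hence integrable, which lets the integral of the
difference split.
-/

open MeasureTheory

theorem Finset.preimage_piecewise_univ_pi {ι : Type*} [DecidableEq ι] {α : ι → Type*}
    (K : Finset ι) (s : ∀ i, Set (α i)) :
    (fun p : (∀ i, α i) × (∀ i, α i) => K.piecewise p.1 p.2) ⁻¹' Set.univ.pi s =
      Set.univ.pi (K.piecewise s fun _ => Set.univ) ×ˢ
        Set.univ.pi (K.piecewise (fun _ => Set.univ) s) := by
  ext p
  simp only [Set.mem_preimage, Set.mem_prod, Set.mem_univ_pi, ← forall_and]
  refine forall_congr' fun j => ?_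
  by_cases hj : j ∈ K <;> simp [hj]

section Recombination

variable {ι : Type*} [Fintype ι] [DecidableEq ι] {α : ι → Type*} [∀ i, MeasurableSpace (α i)]

theorem measurePreserving_finset_piecewise (μ : ∀ i, Measure (α i))
    [∀ i, IsProbabilityMeasure (μ i)] (K : Finset ι) :
    MeasurePreserving (fun p : (∀ i, α i) × (∀ i, α i) => K.piecewise p.1 p.2)
      ((Measure.pi μ).prod (Measure.pi μ)) (Measure.pi μ) := by
  have hmeas : Measurable fun p : (∀ i, α i) × (∀ i, α i) => K.piecewise p.1 p.2 :=
    measurable_pi_lambda _ fun j => by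
      by_cases hj : j ∈ K <;> simp only [Finset.piecewise, hj, if_true, if_false] <;> fun_prop
  refine ⟨hmeas, (Measure.pi_eq fun s hs => ?_).symm⟩
  rw [Measure.map_apply hmeas (.univ_pi hs), Finset.preimage_piecewise_univ_pi, Measure.prod_prod,
    Measure.pi_pi, Measure.pi_pi, ← Finset.prod_mul_distrib]
  refine Finset.prod_congr rfl fun j _ => ?_
  by_cases hj : j ∈ K <;> simp [hj]

end Recombination

section SquareIntegrable

variable {α β : Type*} [MeasurableSpace α] [MeasurableSpace β] {μ : Measure α} {ν : Measure β}
  {f : α → ℝ}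

theorem MeasureTheory.MemLp.integrable_mul_comp (hf : MemLp f 2 μ) {S T : β → α}
    (hS : MeasurePreserving S ν μ) (hT : MeasurePreserving T ν μ) :
    Integrable (fun p => f (S p) * f (T p)) ν :=
  (hf.comp_measurePreserving hS).integrable_mul (hf.comp_measurePreserving hT)

theorem integral_mul_sub_eq_sub_sq [IsProbabilityMeasure μ] (hf : MemLp f 2 μ)
    {T : α × α → α} (hT : MeasurePreserving T (μ.prod μ) μ) :
    ∫ x, ∫ x', f x * (f (T (x, x')) - f x') ∂μ ∂μ
      = (∫ x, ∫ x', f x * f (T (x, x')) ∂μ ∂μ) - (∫ x, f x ∂μ) ^ 2 := by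
  have hfT := hf.integrable_mul_comp measurePreserving_fst hT
  have hff := hf.integrable_mul_comp measurePreserving_fst measurePreserving_snd
  have hsub : Integrable (fun p : α × α => f p.1 * (f (T p) - f p.2)) (μ.prod μ) := by
    simpa only [mul_sub] using hfT.sub' hff
  rw [integral_integral hsub, integral_integral hfT, sq, ← integral_prod_mul]
  simp only [mul_sub]
  exact integral_sub hfT hff

end SquareIntegrable

/-- Sobol'–Kucherenko formula: for `f` square-integrable on `[0,1]^d` with variable
partition `x = (y,z)` given by index set `K` and an independent copy `x' = (y',z')`,
`D_y = ∫ f(y,z) [f(y,z') − f(y',z')] dx dx'`, where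
`D_y = ∫ f(y,z) f(y,z') dy dz dz' − f₀²`. -/
theorem sobol_kucherenko_formula (d : ℕ) (f : (Fin d → ℝ) → ℝ)
    (μ : Measure (Fin d → ℝ))
    (hμ : μ = Measure.pi fun _ => (volume : Measure ℝ).restrict (Set.Icc 0 1))
    (hf : MemLp f 2 μ)
    (K : Finset (Fin d)) :
    ∫ x, ∫ x', f x * (f (fun j => if j ∈ K then x j else x' j) - f x') ∂μ ∂μ
      = (∫ x, ∫ x', f x * f (fun j => if j ∈ K then x j else x' j) ∂μ ∂μ)
          - (∫ x, f x ∂μ) ^ 2 := by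
  have : IsProbabilityMeasure ((volume : Measure ℝ).restrict (Set.Icc 0 1)) :=
    ⟨by simp [Real.volume_Icc]⟩
  subst hμ
  exact integral_mul_sub_eq_sub_sq hf (measurePreserving_finset_piecewise _ K)
end

section
/- (Owen's formula) For f square-integrable on [0,1]^d with variable partition x = (y,z) and two independent copies x' = (y',z'), x'' = (y'',z''), D_y = ∫ [f(y,z) − f(y'',z)] [f(y,z') − f(y',z')] dy dz dy' dz' dy''. -/
/-!
Write `x = (y, z)`. Integrating out `x''` and then `x'` turns the integrand into
`(f x - u x) * (v x - f₀)`, where `u x = ∫ f (y'', z) dy''` depends on `z` only and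
`v x = ∫ f (y, z') dz'` on `y` only, both with mean `f₀`. Since the `y`- and `z`-blocks are
independent, `∫ u v = f₀²`, and expanding the product leaves `∫ f v - f₀²`.
-/

open MeasureTheory Function

/-- `m a b` is the point with the `y`-block of `a` and the `z`-block of `b`; measure preservation
of `(a, b) ↦ m a b` says that the two blocks are independent under `μ`. -/
structure IsIndependentMerge {X : Type*} [MeasurableSpace X] (μ : Measure X)
    (m : X → X → X) : Prop where
  measurePreserving : MeasurePreserving (uncurry m) (μ.prod μ) μ
  merge_merge_left (a b c : X) : m (m a b) c = m a c
  merge_merge_right (a b c : X) : m a (m b c) = m a c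

namespace IsIndependentMerge

variable {X : Type*} [MeasurableSpace X] {μ : Measure X} {m : X → X → X} {f g h : X → ℝ}

theorem integral_comp (hm : IsIndependentMerge μ m) (hg : AEStronglyMeasurable g μ) :
    ∫ p, g (m p.1 p.2) ∂μ.prod μ = ∫ x, g x ∂μ := by
  have hmap := integral_map hm.measurePreserving.measurable.aemeasurable
    (hm.measurePreserving.map_eq ▸ hg)
  rw [hm.measurePreserving.map_eq] at hmap
  exact hmap.symm

theorem integrable_comp (hm : IsIndependentMerge μ m) (hg : Integrable g μ) :
    Integrable (fun p : X × X => g (m p.1 p.2)) (μ.prod μ) :=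
  hm.measurePreserving.integrable_comp_of_integrable hg

theorem integrable_mul (hm : IsIndependentMerge μ m) (hg : Integrable g μ) (hh : Integrable h μ)
    (hgm : ∀ a b, g (m a b) = g a) (hhm : ∀ a b, h (m a b) = h b) :
    Integrable (fun x => g x * h x) μ := by
  refine (hm.measurePreserving.integrable_comp
    (hg.aestronglyMeasurable.mul hh.aestronglyMeasurable)).mp ?_
  simpa only [comp_def, uncurry, Pi.mul_apply, hgm, hhm] using hg.mul_prod hh

section SFinite

variable [SFinite μ]

theorem swap (hm : IsIndependentMerge μ m) : IsIndependentMerge μ (fun a b => m b a) where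
  measurePreserving := hm.measurePreserving.comp Measure.measurePreserving_swap
  merge_merge_left a b c := hm.merge_merge_right c b a
  merge_merge_right a b c := hm.merge_merge_left c b a

theorem integral_integral_comp (hm : IsIndependentMerge μ m) (hg : Integrable g μ) :
    ∫ a, ∫ b, g (m a b) ∂μ ∂μ = ∫ x, g x ∂μ := by
  rw [integral_integral (hm.integrable_comp hg), hm.integral_comp hg.aestronglyMeasurable]

theorem integrable_integral_comp (hm : IsIndependentMerge μ m) (hg : Integrable g μ) :
    Integrable (fun a => ∫ b, g (m a b) ∂μ) μ :=
  (hm.integrable_comp hg).integral_prod_left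

theorem integral_mul_eq_mul_integral (hm : IsIndependentMerge μ m)
    (hg : AEStronglyMeasurable g μ) (hh : AEStronglyMeasurable h μ)
    (hgm : ∀ a b, g (m a b) = g a) (hhm : ∀ a b, h (m a b) = h b) :
    ∫ x, g x * h x ∂μ = (∫ x, g x ∂μ) * ∫ x, h x ∂μ := by
  rw [← hm.integral_comp (g := fun x => g x * h x) (hg.mul hh)]
  simp only [hgm, hhm]
  exact integral_prod_mul g h

end SFinite

variable [IsProbabilityMeasure μ]

theorem integrable_mul_integral_comp (hm : IsIndependentMerge μ m) (hf : MemLp f 2 μ) :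
    Integrable (fun a => f a * ∫ b, f (m a b) ∂μ) μ := by
  have hprod : Integrable (fun p : X × X => f p.1 * f (m p.1 p.2)) (μ.prod μ) :=
    (hf.comp_measurePreserving measurePreserving_fst).integrable_mul
      (hf.comp_measurePreserving hm.measurePreserving)
  simpa only [integral_const_mul] using hprod.integral_prod_left

theorem ae_integral_integral_sub_mul_sub (hm : IsIndependentMerge μ m) (hf : Integrable f μ) :
    ∀ᵐ x ∂μ, ∫ x', ∫ x'', (f x - f (m x'' x)) * (f (m x x') - f x') ∂μ ∂μ
      = (f x - ∫ a, f (m a x) ∂μ) * ((∫ b, f (m x b) ∂μ) - ∫ y, f y ∂μ) := by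
  filter_upwards [(hm.swap.integrable_comp hf).prod_right_ae,
    (hm.integrable_comp hf).prod_right_ae] with x hleft hright
  simp only [integral_mul_const, integral_const_mul]
  rw [integral_sub (integrable_const _) hleft, integral_sub hright hf]
  simp

theorem owen_formula (hm : IsIndependentMerge μ m) (hf : MemLp f 2 μ) :
    ∫ x, ∫ x', ∫ x'', (f x - f (m x'' x)) * (f (m x x') - f x') ∂μ ∂μ ∂μ
      = (∫ x, ∫ x', f x * f (m x x') ∂μ ∂μ) - (∫ x, f x ∂μ) ^ 2 := by
  have hfi : Integrable f μ := hf.integrable one_le_two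
  set f₀ := ∫ x, f x ∂μ
  set u : X → ℝ := fun x => ∫ a, f (m a x) ∂μ
  set v : X → ℝ := fun x => ∫ b, f (m x b) ∂μ
  have hu : Integrable u μ := hm.swap.integrable_integral_comp hfi
  have hv : Integrable v μ := hm.integrable_integral_comp hfi
  have hu₀ : ∫ x, u x ∂μ = f₀ := hm.swap.integral_integral_comp hfi
  have hv₀ : ∫ x, v x ∂μ = f₀ := hm.integral_integral_comp hfi
  have hv_left (a b : X) : v (m a b) = v a := by simp only [v, hm.merge_merge_left]
  have hu_right (a b : X) : u (m a b) = u b := by simp only [u, hm.merge_merge_right]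
  have hvu : ∫ x, v x * u x ∂μ = f₀ * f₀ := by
    rw [hm.integral_mul_eq_mul_integral hv.1 hu.1 hv_left hu_right, hv₀, hu₀]
  have hfv : Integrable (fun x => f x * v x) μ := hm.integrable_mul_integral_comp hf
  have hvu_int : Integrable (fun x => v x * u x) μ := hm.integrable_mul hv hu hv_left hu_right
  calc _ = ∫ x, (f x - u x) * (v x - f₀) ∂μ :=
        integral_congr_ae (hm.ae_integral_integral_sub_mul_sub hfi)
    _ = ∫ x, (f x * v x - v x * u x - f₀ * (f x - u x)) ∂μ := by congr 1; ext x; ring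
    _ = ∫ x, f x * v x ∂μ - ∫ x, v x * u x ∂μ - f₀ * ∫ x, (f x - u x) ∂μ := by
        have hfvu : Integrable (fun x => f x * v x - v x * u x) μ := hfv.sub hvu_int
        have hfu : Integrable (fun x => f₀ * (f x - u x)) μ := (hfi.sub hu).const_mul f₀
        rw [integral_sub hfvu hfu, integral_sub hfv hvu_int, integral_const_mul]
    _ = ∫ x, f x * v x ∂μ - f₀ * f₀ - f₀ * (f₀ - f₀) := by rw [hvu, integral_sub hfi hu, hu₀]
    _ = _ := by
        simp only [v, integral_const_mul]
        ring

end IsIndependentMerge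

theorem isIndependentMerge_pi {ι : Type*} [Fintype ι] [DecidableEq ι] {X : ι → Type*}
    [∀ i, MeasurableSpace (X i)] (μ : ∀ i, Measure (X i)) [∀ i, IsProbabilityMeasure (μ i)]
    (K : Finset ι) :
    IsIndependentMerge (Measure.pi μ)
      (fun (a b : ∀ i, X i) j => if j ∈ K then a j else b j) where
  measurePreserving := by
    have he := measurePreserving_piEquivPiSubtypeProd μ (· ∈ K)
    have hsplit := (measurePreserving_fst.comp he).prod (measurePreserving_snd.comp he)
    convert he.symm.comp hsplit using 1
    ext ⟨a, b⟩ j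
    by_cases hj : j ∈ K <;> simp [MeasurableEquiv.piEquivPiSubtypeProd, hj]
  merge_merge_left a b c := by
    funext j; by_cases hj : j ∈ K <;> simp [hj]
  merge_merge_right a b c := by
    funext j; by_cases hj : j ∈ K <;> simp [hj]

/-- Owen's formula: for `f` square-integrable on `[0,1]^d` with variable partition
`x = (y,z)` given by index set `K` and two independent copies `x' = (y',z')`,
`x'' = (y'',z'')`,
`D_y = ∫ [f(y,z) − f(y'',z)] [f(y,z') − f(y',z')] dx dx' dx''`, where
`D_y = ∫ f(y,z) f(y,z') dy dz dz' − f₀²`. -/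
theorem owen_formula (d : ℕ) (f : (Fin d → ℝ) → ℝ)
    (μ : Measure (Fin d → ℝ))
    (hμ : μ = Measure.pi fun _ => (volume : Measure ℝ).restrict (Set.Icc 0 1))
    (hf : MemLp f 2 μ)
    (K : Finset (Fin d)) :
    ∫ x, ∫ x', ∫ x'',
        (f x - f (fun j => if j ∈ K then x'' j else x j))
          * (f (fun j => if j ∈ K then x j else x' j) - f x') ∂μ ∂μ ∂μ
      = (∫ x, ∫ x', f x * f (fun j => if j ∈ K then x j else x' j) ∂μ ∂μ)
          - (∫ x, f x ∂μ) ^ 2 := by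
  have : IsProbabilityMeasure ((volume : Measure ℝ).restrict (Set.Icc 0 1)) :=
    ⟨by simp⟩
  subst hμ
  exact (isIndependentMerge_pi _ K).owen_formula hf
end
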